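/- arXiv:2011.08360 — 3 statements merged into one kernel-verified Lean document; each statement's English description precedes it below -/
import Mathlib

section
/- Given a symmetric matrix A ∈ ℝ^{p×p} with eigenvalue decomposition A = Σᵢ λᵢ vᵢ vᵢᵀ where λ₁ ≥ ⋯ ≥ λ_p, the matrix A₀ = Σᵢ max(λᵢ, 0) vᵢ vᵢᵀ minimizes ‖A − X‖_* over all positive semidefinite matrices X, where ‖·‖_* is the nuclear norm (sum of singular values). -/
/-!
Write `nuc M = tr |M|` with `|M| = (Mᵀ M)^{1/2}`. In the orthonormal eigenbasis `v` of `A`, the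
residual `A - A₀` is diagonal with entries `λᵢ - max λᵢ 0`, so its nuclear norm is
`∑ max (-λᵢ) 0 = -tr (A P)`, where `P` is the orthogonal projection onto the eigenvectors with
negative eigenvalue. For symmetric `M = A - X`, both `|M| + M = 2 M⁺` and `|M|` are PSD, and so
are `P` and `1 - P`; hence `-tr (M P) ≤ tr (|M| P) ≤ tr |M|`. Since `tr (X P) ≥ 0` for PSD `X`,
`nuc (A - X) ≥ -tr (A P) + tr (X P) ≥ nuc (A - A₀)`.
-/

open Matrix
noncomputable section

/-- Frobenius norm of a real matrix. -/
def frob {m n : Type*} [Fintype m] [Fintype n] (A : Matrix m n ℝ) : ℝ :=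
  Real.sqrt (∑ i, ∑ j, (A i j) ^ 2)

/-- Spectral (operator ℓ²→ℓ²) norm of a real matrix. -/
def spec {m n : Type*} [Fintype m] [Fintype n] [DecidableEq n] (A : Matrix m n ℝ) : ℝ :=
  ‖LinearMap.toContinuousLinearMap (Matrix.toEuclideanLin A)‖

/-- Nuclear norm: sum of singular values (square roots of eigenvalues of AᵀA). -/
def nuc {m n : Type*} [Fintype m] [Fintype n] [DecidableEq n] (A : Matrix m n ℝ) : ℝ :=
  ∑ i, Real.sqrt ((Matrix.isHermitian_conjTranspose_mul_self A).eigenvalues i)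

open scoped MatrixOrder ComplexOrder

namespace Matrix

variable {n : Type*} [Fintype n] [DecidableEq n]

lemma IsHermitian.trace_cfc {𝕜 : Type*} [RCLike 𝕜] {A : Matrix n n 𝕜} (hA : A.IsHermitian)
    (f : ℝ → ℝ) : (cfc f A).trace = ∑ i, (f (hA.eigenvalues i) : 𝕜) := by
  rw [hA.cfc_eq, IsHermitian.cfc, Unitary.conjStarAlgAut_apply, trace_mul_cycle,
    Unitary.coe_star_mul_self, one_mul, trace_diagonal]
  rfl

lemma nuc_eq_trace_abs (M : Matrix n n ℝ) : nuc M = (CFC.abs M).trace := by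
  have hMM : 0 ≤ star M * M := star_mul_self_nonneg M
  rw [CFC.abs, CFC.sqrt_eq_real_sqrt _ hMM, cfcₙ_eq_cfc, IsHermitian.trace_cfc hMM.isSelfAdjoint]
  rfl

lemma trace_mul_nonneg {𝕜 : Type*} [RCLike 𝕜] {A B : Matrix n n 𝕜} (hA : 0 ≤ A) (hB : 0 ≤ B) :
    0 ≤ (A * B).trace := by
  have hS : IsSelfAdjoint (CFC.sqrt B) := (CFC.sqrt_nonneg B).isSelfAdjoint
  have hconj : (star (CFC.sqrt B) * A * CFC.sqrt B).trace = (A * B).trace := by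
    rw [hS.star_eq, trace_mul_cycle, CFC.sqrt_mul_sqrt_self B hB, trace_mul_comm]
  rw [← hconj]
  exact (nonneg_iff_posSemidef.mp (star_left_conjugate_nonneg hA _)).trace_nonneg

lemma neg_trace_mul_le_nuc {M P : Matrix n n ℝ} (hM : M.IsHermitian) (hP₀ : 0 ≤ P)
    (hP₁ : P ≤ 1) : -(M * P).trace ≤ nuc M := by
  have habs_add : 0 ≤ CFC.abs M + M := by
    rw [CFC.abs_add_self M hM]
    exact smul_nonneg zero_le_two (CFC.posPart_nonneg M)
  have h₁ := trace_mul_nonneg habs_add hP₀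
  have h₂ := trace_mul_nonneg (CFC.abs_nonneg M) (sub_nonneg.mpr hP₁)
  rw [add_mul, trace_add] at h₁
  rw [mul_sub, mul_one, trace_sub] at h₂
  rw [nuc_eq_trace_abs]
  linarith

lemma trace_conjStarAlgAut {R : Type*} [CommRing R] [StarRing R] (U : unitary (Matrix n n R))
    (x : Matrix n n R) : (Unitary.conjStarAlgAut R _ U x).trace = x.trace := by
  rw [Unitary.conjStarAlgAut_apply, trace_mul_cycle, Unitary.coe_star_mul_self, one_mul]

section Conjugation

variable (U : unitary (Matrix n n ℝ))

lemma conjStarAlgAut_diagonal_nonneg {c : n → ℝ} (hc : 0 ≤ c) :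
    0 ≤ Unitary.conjStarAlgAut ℝ _ U (diagonal c) :=
  map_nonneg _ (nonneg_iff_posSemidef.mpr (posSemidef_diagonal_iff.mpr hc))

lemma abs_conjStarAlgAut_diagonal (c : n → ℝ) :
    CFC.abs (Unitary.conjStarAlgAut ℝ _ U (diagonal c)) =
      Unitary.conjStarAlgAut ℝ _ U (diagonal fun i => |c i|) := by
  refine CFC.sqrt_unique ?_ (conjStarAlgAut_diagonal_nonneg U fun i => abs_nonneg (c i))
  rw [← map_star, ← map_mul, ← map_mul, star_eq_conjTranspose, diagonal_conjTranspose,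
    diagonal_mul_diagonal, diagonal_mul_diagonal]
  simp_rw [star_trivial, abs_mul_abs_self]

lemma nuc_conjStarAlgAut_diagonal (c : n → ℝ) :
    nuc (Unitary.conjStarAlgAut ℝ _ U (diagonal c)) = ∑ i, |c i| := by
  rw [nuc_eq_trace_abs, abs_conjStarAlgAut_diagonal, trace_conjStarAlgAut, trace_diagonal]

end Conjugation

lemma exists_unitary_sum_smul_vecMulVec_eq {v : n → n → ℝ}
    (hv : ∀ i j, ∑ k, v i k * v j k = if i = j then (1 : ℝ) else 0) :
    ∃ U : unitary (Matrix n n ℝ), ∀ c : n → ℝ,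
      ∑ i, c i • vecMulVec (v i) (v i) = Unitary.conjStarAlgAut ℝ _ U (diagonal c) := by
  have hV : of v * (of v)ᵀ = 1 := by
    ext i j
    simp [mul_apply, hv i j, one_apply]
  refine ⟨⟨(of v)ᵀ, mem_unitaryGroup_iff.mpr ?_⟩, fun c => ?_⟩
  · rw [star_eq_conjTranspose, conjTranspose_eq_transpose_of_trivial, transpose_transpose]
    exact mul_eq_one_comm.mp hV
  · ext j k
    simp [sum_apply, vecMulVec_apply, mul_apply, diagonal, mul_comm, mul_left_comm]

end Matrix

theorem stmt_4_general {p : ℕ}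
    (lam : Fin p → ℝ)
    (v : Fin p → (Fin p → ℝ))
    (hv : ∀ i j, ∑ k, v i k * v j k = if i = j then (1 : ℝ) else 0)
    (A : Matrix (Fin p) (Fin p) ℝ)
    (hA : A = ∑ i, lam i • Matrix.vecMulVec (v i) (v i))
    (A₀ : Matrix (Fin p) (Fin p) ℝ)
    (hA₀ : A₀ = ∑ i, max (lam i) 0 • Matrix.vecMulVec (v i) (v i)) :
    ∀ X : Matrix (Fin p) (Fin p) ℝ, X.PosSemidef → nuc (A - A₀) ≤ nuc (A - X) := by
  intro X hX
  obtain ⟨U, hU⟩ := exists_unitary_sum_smul_vecMulVec_eq hv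
  set Ψ := Unitary.conjStarAlgAut ℝ _ U
  rw [hU] at hA hA₀
  set e : Fin p → ℝ := fun i => if lam i < 0 then 1 else 0
  have hP₀ : 0 ≤ Ψ (diagonal e) := conjStarAlgAut_diagonal_nonneg U fun i => by positivity
  have hP₁ : Ψ (diagonal e) ≤ 1 := by
    rw [← sub_nonneg, ← map_one Ψ, ← diagonal_one, ← map_sub, diagonal_sub]
    exact conjStarAlgAut_diagonal_nonneg U fun i => by simp only [e]; split_ifs <;> norm_num
  have hAP : -(A * Ψ (diagonal e)).trace = ∑ i, |lam i - max (lam i) 0| := by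
    rw [hA, ← map_mul, trace_conjStarAlgAut, diagonal_mul_diagonal, trace_diagonal,
      ← Finset.sum_neg_distrib]
    refine Finset.sum_congr rfl fun i _ => ?_
    simp only [e]
    split_ifs with h
    · simp [max_eq_right h.le, abs_of_neg h]
    · simp [max_eq_left (not_lt.mp h)]
  have hA_herm : A.IsHermitian := hA ▸ (isHermitian_diagonal lam).isSelfAdjoint.map Ψ
  have hXP := trace_mul_nonneg (nonneg_iff_posSemidef.mpr hX) hP₀
  calc nuc (A - A₀) = ∑ i, |lam i - max (lam i) 0| := by
        rw [hA, hA₀, ← map_sub, diagonal_sub, nuc_conjStarAlgAut_diagonal]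
    _ ≤ -((A - X) * Ψ (diagonal e)).trace := by
        rw [sub_mul, trace_sub, ← hAP]
        linarith
    _ ≤ nuc (A - X) := neg_trace_mul_le_nuc (hA_herm.sub hX.1) hP₀ hP₁

/-- Projection onto the PSD cone in nuclear norm: truncating negative eigenvalues
of a symmetric matrix minimizes the nuclear-norm distance over PSD matrices. -/
theorem stmt_4 {p : ℕ}
    (lam : Fin p → ℝ) (hlam : Antitone lam)
    (v : Fin p → (Fin p → ℝ))
    (hv : ∀ i j, ∑ k, v i k * v j k = if i = j then (1 : ℝ) else 0)
    (A : Matrix (Fin p) (Fin p) ℝ)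
    (hA : A = ∑ i, lam i • Matrix.vecMulVec (v i) (v i))
    (A₀ : Matrix (Fin p) (Fin p) ℝ)
    (hA₀ : A₀ = ∑ i, max (lam i) 0 • Matrix.vecMulVec (v i) (v i)) :
    ∀ X : Matrix (Fin p) (Fin p) ℝ, X.PosSemidef → nuc (A - A₀) ≤ nuc (A - X) :=
  stmt_4_general lam v hv A hA A₀ hA₀
end
end

section
/- Let Xᵗ, X̄ ∈ ℝ^{p₁×p₂} be rank-r matrices with left/right singular-vector matrices (Uᵗ, Vᵗ) and (Ū, V̄) respectively. Define the orthogonal projectors P_{Xᵗ}(Z) = P_{Uᵗ} Z P_{Vᵗ} + P_{Uᵗ⊥} Z P_{Vᵗ} + P_{Uᵗ} Z P_{Vᵗ⊥} and P_{X̄}(Z) analogously. Then the operator norm of (P_{Xᵗ} − P_{X̄}) with respect to the Frobenius norm is at most 2‖Xᵗ − X̄‖ / σ_r(X̄). -/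
/-!
Write `P_X(Z) = Z - (1 - P_U) Z (1 - P_V)`. Then
`P_{Xᵗ}(Z) - P_{X̄}(Z) = (P_{Uᵗ} - P_{Ū}) Z (1 - P_{V̄}) + (1 - P_{Uᵗ}) Z (P_{Vᵗ} - P_{V̄})`,
so it suffices to show `‖P_{Uᵗ} - P_{Ū}‖ ≤ δ := ‖Xᵗ - X̄‖ / σ_r(X̄)`, and the same for `V` by
transposing. With `G = V̄ Σ̄⁻¹ Ūᵀ` we have `X̄ G = P_{Ū}` and `(1 - P_{Uᵗ}) Xᵗ = 0`, hence
`(1 - P_{Uᵗ}) P_{Ū} = (1 - P_{Uᵗ}) (X̄ - Xᵗ) G` has norm at most `δ`. Because both subspaces have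
dimension `r`, `‖P_{Uᵗ} (1 - P_{Ū})‖ = ‖(1 - P_{Uᵗ}) P_{Ū}‖`, and for orthogonal projections
`‖P - Q‖ ≤ max ‖P (1 - Q)‖ ‖(1 - P) Q‖`, since `(P - Q) x` splits into orthogonal pieces.
-/

open Matrix
noncomputable section

variable {m n k r s : Type*} [Fintype m] [Fintype n] [Fintype k] [Fintype r] [Fintype s]

section FrobeniusNorm

attribute [local instance] Matrix.frobeniusSeminormedAddCommGroup

theorem frob_eq_frobenius_norm (A : Matrix m n ℝ) : frob A = ‖A‖ := by
  rw [frobenius_norm_def, frob, Real.sqrt_eq_rpow]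
  congr 1
  refine Finset.sum_congr rfl fun i _ => Finset.sum_congr rfl fun j _ => ?_
  rw [Real.norm_eq_abs, Real.rpow_two, sq_abs]

theorem frob_add_le (A B : Matrix m n ℝ) : frob (A + B) ≤ frob A + frob B := by
  simp only [frob_eq_frobenius_norm]
  exact norm_add_le A B

end FrobeniusNorm

theorem frob_nonneg (A : Matrix m n ℝ) : 0 ≤ frob A := Real.sqrt_nonneg _

theorem frob_transpose (A : Matrix m n ℝ) : frob Aᵀ = frob A := by
  rw [frob, frob, Finset.sum_comm]
  rfl

theorem frob_sq (A : Matrix m n ℝ) : frob A ^ 2 = ∑ j, Aᵀ j ⬝ᵥ Aᵀ j := by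
  rw [← frob_transpose, frob, Real.sq_sqrt (by positivity)]
  simp [dotProduct, sq]

theorem dotProduct_self_nonneg (x : n → ℝ) : 0 ≤ x ⬝ᵥ x :=
  Finset.sum_nonneg fun i _ => mul_self_nonneg (x i)

theorem dotProduct_self_eq_norm_sq (x : n → ℝ) : x ⬝ᵥ x = ‖WithLp.toLp 2 x‖ ^ 2 := by
  rw [EuclideanSpace.real_norm_sq_eq]
  simp [dotProduct, sq]

theorem dotProduct_mul_dotProduct_le (x y : n → ℝ) :
    (x ⬝ᵥ y) * (x ⬝ᵥ y) ≤ (x ⬝ᵥ x) * (y ⬝ᵥ y) := by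
  simpa [dotProduct, sq] using Finset.sum_mul_sq_le_sq_mul_sq Finset.univ x y

theorem mulVec_dotProduct_mulVec (A : Matrix m n ℝ) (B : Matrix m k ℝ) (x : n → ℝ)
    (y : k → ℝ) : (A *ᵥ x) ⬝ᵥ (B *ᵥ y) = x ⬝ᵥ ((Aᵀ * B) *ᵥ y) := by
  conv_rhs => rw [← mulVec_mulVec, dotProduct_mulVec, vecMul_transpose]

theorem mulVec_dotProduct_self_of_transpose_mul_self [DecidableEq n] {U : Matrix m n ℝ}
    (hU : Uᵀ * U = 1) (x : n → ℝ) : (U *ᵥ x) ⬝ᵥ (U *ᵥ x) = x ⬝ᵥ x := by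
  rw [mulVec_dotProduct_mulVec, hU, one_mulVec]

theorem transpose_mulVec_dotProduct_self_ge {W : Matrix n n ℝ} {c : ℝ}
    (h : ∀ x, c * (x ⬝ᵥ x) ≤ (W *ᵥ x) ⬝ᵥ (W *ᵥ x)) (y : n → ℝ) :
    c * (y ⬝ᵥ y) ≤ (Wᵀ *ᵥ y) ⬝ᵥ (Wᵀ *ᵥ y) := by
  classical
  rcases le_or_gt c 0 with hc | hc
  · exact (mul_nonpos_of_nonpos_of_nonneg hc (dotProduct_self_nonneg y)).trans
      (dotProduct_self_nonneg _)
  have hinj : Function.Injective W.mulVec := fun a b hab => by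
    have hab' := h (a - b)
    rw [mulVec_sub, hab, sub_self, zero_dotProduct] at hab'
    have h0 : (a - b) ⬝ᵥ (a - b) = 0 :=
      le_antisymm (nonpos_of_mul_nonpos_right hab' hc) (dotProduct_self_nonneg _)
    exact sub_eq_zero.1 (dotProduct_self_eq_zero.1 h0)
  obtain ⟨x, rfl⟩ := mulVec_surjective_iff_isUnit.2 (mulVec_injective_iff_isUnit.1 hinj) y
  -- `W` is onto, and `‖W x‖² = ⟪x, Wᵀ W x⟫ ≤ ‖x‖ ‖Wᵀ W x‖` by Cauchy–Schwarz.
  have hcs := dotProduct_mul_dotProduct_le x (Wᵀ *ᵥ (W *ᵥ x))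
  rw [dotProduct_mulVec, vecMul_transpose] at hcs
  have hx := h x
  have hA := dotProduct_self_nonneg (Wᵀ *ᵥ (W *ᵥ x))
  rcases (dotProduct_self_nonneg (W *ᵥ x)).eq_or_lt with hY0 | hYpos
  · rw [← hY0, mul_zero]
    exact hA
  · nlinarith

theorem IsStarProjection.transpose_eq {P : Matrix n n ℝ} (hP : IsStarProjection P) : Pᵀ = P := by
  rw [← conjTranspose_eq_transpose_of_trivial, ← star_eq_conjTranspose, hP.isSelfAdjoint.star_eq]

theorem isStarProjection_mul_transpose [DecidableEq n] {U : Matrix m n ℝ} (hU : Uᵀ * U = 1) :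
    IsStarProjection (U * Uᵀ) where
  isIdempotentElem := by
    rw [IsIdempotentElem, Matrix.mul_assoc, ← Matrix.mul_assoc Uᵀ, hU, Matrix.one_mul]
  isSelfAdjoint := by
    rw [IsSelfAdjoint, star_eq_conjTranspose, conjTranspose_eq_transpose_of_trivial,
      transpose_mul, transpose_transpose]

theorem IsStarProjection.dotProduct_self_eq_add [DecidableEq n] {P : Matrix n n ℝ}
    (hP : IsStarProjection P) (x : n → ℝ) :
    x ⬝ᵥ x = (P *ᵥ x) ⬝ᵥ (P *ᵥ x) + ((1 - P) *ᵥ x) ⬝ᵥ ((1 - P) *ᵥ x) := by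
  rw [mulVec_dotProduct_mulVec, mulVec_dotProduct_mulVec, hP.transpose_eq, hP.isIdempotentElem.eq,
    hP.one_sub.transpose_eq, hP.one_sub.isIdempotentElem.eq, ← dotProduct_add, ← add_mulVec,
    add_sub_cancel, one_mulVec]

theorem dotProduct_self_eq_add_of_transpose_mul_self [DecidableEq m] [DecidableEq n]
    {U : Matrix m n ℝ} (hU : Uᵀ * U = 1) (y : m → ℝ) :
    y ⬝ᵥ y = (Uᵀ *ᵥ y) ⬝ᵥ (Uᵀ *ᵥ y) + ((1 - U * Uᵀ) *ᵥ y) ⬝ᵥ ((1 - U * Uᵀ) *ᵥ y) := by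
  rw [← mulVec_dotProduct_self_of_transpose_mul_self hU (Uᵀ *ᵥ y), mulVec_mulVec]
  exact (isStarProjection_mul_transpose hU).dotProduct_self_eq_add y

open scoped Matrix.Norms.L2Operator

theorem spec_eq_l2_opNorm [DecidableEq n] (A : Matrix m n ℝ) : spec A = ‖A‖ := rfl

theorem mulVec_dotProduct_self_le [DecidableEq n] (A : Matrix m n ℝ) (x : n → ℝ) :
    (A *ᵥ x) ⬝ᵥ (A *ᵥ x) ≤ ‖A‖ ^ 2 * (x ⬝ᵥ x) := by
  rw [dotProduct_self_eq_norm_sq, dotProduct_self_eq_norm_sq, ← mul_pow]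
  gcongr
  exact A.l2_opNorm_mulVec (WithLp.toLp 2 x)

theorem l2_opNorm_le_of_mulVec_dotProduct_self_le [DecidableEq n] {A : Matrix m n ℝ} {c : ℝ}
    (hc : 0 ≤ c) (h : ∀ x, (A *ᵥ x) ⬝ᵥ (A *ᵥ x) ≤ c ^ 2 * (x ⬝ᵥ x)) : ‖A‖ ≤ c := by
  rw [l2_opNorm_def]
  refine ContinuousLinearMap.opNorm_le_bound _ hc fun x => ?_
  have hx := h x.ofLp
  rw [dotProduct_self_eq_norm_sq, dotProduct_self_eq_norm_sq, ← mul_pow] at hx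
  exact (pow_le_pow_iff_left₀ (norm_nonneg _) (by positivity) two_ne_zero).1 hx

theorem l2_opNorm_le_one_of_transpose_mul_self [DecidableEq n] {U : Matrix m n ℝ}
    (hU : Uᵀ * U = 1) : ‖U‖ ≤ 1 :=
  l2_opNorm_le_of_mulVec_dotProduct_self_le zero_le_one fun x => by
    rw [mulVec_dotProduct_self_of_transpose_mul_self hU, one_pow, one_mul]

theorem l2_opNorm_transpose [DecidableEq m] [DecidableEq n] (A : Matrix m n ℝ) :
    ‖Aᵀ‖ = ‖A‖ := by
  rw [← conjTranspose_eq_transpose_of_trivial, l2_opNorm_conjTranspose]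

theorem l2_opNorm_diagonal_inv_le [DecidableEq r] {σ : r → ℝ} {c : ℝ} (hc : 0 < c)
    (hσ : ∀ i, c ≤ σ i) : ‖diagonal σ⁻¹‖ ≤ c⁻¹ := by
  rw [l2_opNorm_diagonal]
  refine (pi_norm_le_iff_of_nonneg (by positivity)).2 fun i => ?_
  rw [Pi.inv_apply, norm_inv, Real.norm_of_nonneg (hc.le.trans (hσ i))]
  exact inv_anti₀ hc (hσ i)

theorem l2_opNorm_sub_le_of_isStarProjection [DecidableEq n] {P Q : Matrix n n ℝ}
    (hP : IsStarProjection P) (hQ : IsStarProjection Q) {c : ℝ} (hc : 0 ≤ c)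
    (h₁ : ‖P * (1 - Q)‖ ≤ c) (h₂ : ‖(1 - P) * Q‖ ≤ c) : ‖P - Q‖ ≤ c := by
  refine l2_opNorm_le_of_mulVec_dotProduct_self_le hc fun x => ?_
  have hsplit : (P - Q) *ᵥ x =
      (P * (1 - Q)) *ᵥ ((1 - Q) *ᵥ x) - ((1 - P) * Q) *ᵥ (Q *ᵥ x) := by
    rw [mulVec_mulVec, mulVec_mulVec, ← sub_mulVec, Matrix.mul_assoc,
      hQ.one_sub.isIdempotentElem.eq, Matrix.mul_assoc, hQ.isIdempotentElem.eq]
    congr 1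
    noncomm_ring
  set a := (P * (1 - Q)) *ᵥ ((1 - Q) *ᵥ x)
  set b := ((1 - P) * Q) *ᵥ (Q *ᵥ x)
  have horth : a ⬝ᵥ b = 0 := by
    rw [mulVec_dotProduct_mulVec, transpose_mul, hP.transpose_eq, hQ.one_sub.transpose_eq,
      Matrix.mul_assoc, ← Matrix.mul_assoc P, hP.mul_one_sub_self, Matrix.zero_mul,
      Matrix.mul_zero, zero_mulVec, dotProduct_zero]
  have ha := (mulVec_dotProduct_self_le (P * (1 - Q)) ((1 - Q) *ᵥ x)).trans
    (mul_le_mul_of_nonneg_right (pow_le_pow_left₀ (norm_nonneg _) h₁ 2) (dotProduct_self_nonneg _))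
  have hb := (mulVec_dotProduct_self_le ((1 - P) * Q) (Q *ᵥ x)).trans
    (mul_le_mul_of_nonneg_right (pow_le_pow_left₀ (norm_nonneg _) h₂ 2) (dotProduct_self_nonneg _))
  have hx := hQ.dotProduct_self_eq_add x
  rw [hsplit, sub_dotProduct, dotProduct_sub, dotProduct_sub, dotProduct_comm b a, horth]
  nlinarith

theorem l2_opNorm_one_sub_mul_le_symm [DecidableEq m] [DecidableEq n] {U V : Matrix m n ℝ}
    (hU : Uᵀ * U = 1) (hV : Vᵀ * V = 1) :
    ‖(1 - V * Vᵀ) * (U * Uᵀ)‖ ≤ ‖(1 - U * Uᵀ) * (V * Vᵀ)‖ := by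
  -- Both sides are `√(1 - σ_min(Uᵀ V)²)`, and a square matrix and its transpose share `σ_min`.
  have hW : ∀ x, (1 - ‖(1 - U * Uᵀ) * (V * Vᵀ)‖ ^ 2) * (x ⬝ᵥ x) ≤
      ((Uᵀ * V) *ᵥ x) ⬝ᵥ ((Uᵀ * V) *ᵥ x) := fun x => by
    have hsplit := dotProduct_self_eq_add_of_transpose_mul_self hU (V *ᵥ x)
    have hle := mulVec_dotProduct_self_le ((1 - U * Uᵀ) * (V * Vᵀ)) (V *ᵥ x)
    rw [mulVec_dotProduct_self_of_transpose_mul_self hV] at hsplit hle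
    simp only [← mulVec_mulVec] at hsplit hle ⊢
    rw [mulVec_mulVec x Vᵀ V, hV, one_mulVec] at hle
    linarith
  have hWt := transpose_mulVec_dotProduct_self_ge hW
  rw [transpose_mul, transpose_transpose] at hWt
  refine l2_opNorm_le_of_mulVec_dotProduct_self_le (norm_nonneg _) fun z => ?_
  have hsplit := dotProduct_self_eq_add_of_transpose_mul_self hV (U *ᵥ (Uᵀ *ᵥ z))
  rw [mulVec_dotProduct_self_of_transpose_mul_self hU] at hsplit
  have hWz := hWt (Uᵀ *ᵥ z)
  have hz : (Uᵀ *ᵥ z) ⬝ᵥ (Uᵀ *ᵥ z) ≤ z ⬝ᵥ z := by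
    refine (mulVec_dotProduct_self_le Uᵀ z).trans
      (mul_le_of_le_one_left (dotProduct_self_nonneg z) ?_)
    rw [l2_opNorm_transpose]
    exact pow_le_one₀ (norm_nonneg U) (l2_opNorm_le_one_of_transpose_mul_self hU)
  simp only [← mulVec_mulVec] at hsplit hWz ⊢
  nlinarith [mul_le_mul_of_nonneg_left hz (sq_nonneg ‖(1 - U * Uᵀ) * (V * Vᵀ)‖)]

theorem l2_opNorm_one_sub_mul_le_div [DecidableEq m] [DecidableEq n] [DecidableEq r]
    {Xt Xb : Matrix m n ℝ} {Ut Ub : Matrix m r ℝ} {St : Matrix r s ℝ} {Vt : Matrix n s ℝ}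
    {Vb : Matrix n r ℝ} {σ : r → ℝ} {c : ℝ} (hXt : Xt = Ut * St * Vtᵀ)
    (hXb : Xb = Ub * diagonal σ * Vbᵀ) (hUt : Utᵀ * Ut = 1) (hUb : Ubᵀ * Ub = 1)
    (hVb : Vbᵀ * Vb = 1) (hc : 0 < c) (hσ : ∀ i, c ≤ σ i) :
    ‖(1 - Ut * Utᵀ) * (Ub * Ubᵀ)‖ ≤ ‖Xt - Xb‖ / c := by
  set G := Vb * diagonal σ⁻¹ * Ubᵀ
  have hXbG : Xb * G = Ub * Ubᵀ := by
    have hσσ : diagonal σ * diagonal σ⁻¹ = 1 := by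
      rw [diagonal_mul_diagonal, ← diagonal_one]
      exact congrArg diagonal (funext fun i => mul_inv_cancel₀ (hc.trans_le (hσ i)).ne')
    rw [hXb]
    simp only [G, Matrix.mul_assoc]
    rw [← Matrix.mul_assoc Vbᵀ, hVb, Matrix.one_mul, ← Matrix.mul_assoc (diagonal σ), hσσ,
      Matrix.one_mul]
  have hXt0 : (1 - Ut * Utᵀ) * Xt = 0 := by
    simp only [hXt, Matrix.sub_mul, Matrix.one_mul, Matrix.mul_assoc]
    rw [← Matrix.mul_assoc Utᵀ Ut, hUt, Matrix.one_mul, sub_self]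
  have hG : ‖G‖ ≤ c⁻¹ := by
    calc ‖G‖ ≤ ‖Vb‖ * ‖diagonal σ⁻¹‖ * ‖Ubᵀ‖ :=
          (l2_opNorm_mul _ _).trans (by gcongr; exact l2_opNorm_mul _ _)
      _ ≤ 1 * c⁻¹ * 1 := by
          rw [l2_opNorm_transpose]
          gcongr
          · exact l2_opNorm_le_one_of_transpose_mul_self hVb
          · exact l2_opNorm_diagonal_inv_le hc hσ
          · exact l2_opNorm_le_one_of_transpose_mul_self hUb
      _ = c⁻¹ := by ring
  have hid : (1 - Ut * Utᵀ) * (Ub * Ubᵀ) = -((1 - Ut * Utᵀ) * ((Xt - Xb) * G)) := by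
    rw [Matrix.sub_mul Xt Xb G, hXbG, Matrix.mul_sub, ← Matrix.mul_assoc _ Xt G, hXt0,
      Matrix.zero_mul, zero_sub, neg_neg]
  calc ‖(1 - Ut * Utᵀ) * (Ub * Ubᵀ)‖ ≤ ‖1 - Ut * Utᵀ‖ * (‖Xt - Xb‖ * ‖G‖) := by
        rw [hid, norm_neg]
        exact (l2_opNorm_mul _ _).trans (by gcongr; exact l2_opNorm_mul _ _)
    _ ≤ 1 * (‖Xt - Xb‖ * c⁻¹) := by
        gcongr
        exact (isStarProjection_mul_transpose hUt).one_sub.norm_le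
    _ = ‖Xt - Xb‖ / c := by ring

theorem l2_opNorm_mul_transpose_sub_le [DecidableEq m] [DecidableEq n] [DecidableEq r]
    {Xt Xb : Matrix m n ℝ} {Ut Ub : Matrix m r ℝ} {St : Matrix r s ℝ} {Vt : Matrix n s ℝ}
    {Vb : Matrix n r ℝ} {σ : r → ℝ} {c : ℝ} (hXt : Xt = Ut * St * Vtᵀ)
    (hXb : Xb = Ub * diagonal σ * Vbᵀ) (hUt : Utᵀ * Ut = 1) (hUb : Ubᵀ * Ub = 1)
    (hVb : Vbᵀ * Vb = 1) (hc : 0 < c) (hσ : ∀ i, c ≤ σ i) :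
    ‖Ut * Utᵀ - Ub * Ubᵀ‖ ≤ ‖Xt - Xb‖ / c := by
  have hPt := isStarProjection_mul_transpose hUt
  have hPb := isStarProjection_mul_transpose hUb
  have h := l2_opNorm_one_sub_mul_le_div hXt hXb hUt hUb hVb hc hσ
  refine l2_opNorm_sub_le_of_isStarProjection hPt hPb (by positivity) ?_ h
  calc ‖Ut * Utᵀ * (1 - Ub * Ubᵀ)‖ = ‖(1 - Ub * Ubᵀ) * (Ut * Utᵀ)‖ := by
        rw [← l2_opNorm_transpose, transpose_mul, hPt.transpose_eq, hPb.one_sub.transpose_eq]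
    _ ≤ ‖(1 - Ut * Utᵀ) * (Ub * Ubᵀ)‖ := l2_opNorm_one_sub_mul_le_symm hUt hUb
    _ ≤ ‖Xt - Xb‖ / c := h

theorem frob_mul_le_l2_opNorm_mul [DecidableEq n] (A : Matrix m n ℝ) (Z : Matrix n k ℝ) :
    frob (A * Z) ≤ ‖A‖ * frob Z := by
  refine (pow_le_pow_iff_left₀ (frob_nonneg _) (by positivity [frob_nonneg Z])
    two_ne_zero).1 ?_
  rw [mul_pow, frob_sq, frob_sq, Finset.mul_sum]
  exact Finset.sum_le_sum fun j _ => mulVec_dotProduct_self_le A (Zᵀ j)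

theorem frob_mul_le_mul_l2_opNorm [DecidableEq n] [DecidableEq k] (Z : Matrix m n ℝ)
    (B : Matrix n k ℝ) : frob (Z * B) ≤ frob Z * ‖B‖ := by
  rw [← frob_transpose, transpose_mul, ← frob_transpose Z, ← l2_opNorm_transpose B, mul_comm]
  exact frob_mul_le_l2_opNorm_mul Bᵀ Zᵀ

def tangentSpaceProj [DecidableEq m] [DecidableEq n] (P : Matrix m m ℝ) (Q : Matrix n n ℝ)
    (Z : Matrix m n ℝ) : Matrix m n ℝ :=
  P * Z * Q + (1 - P) * Z * Q + P * Z * (1 - Q)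

theorem frob_tangentSpaceProj_sub_le [DecidableEq m] [DecidableEq n] {P P' : Matrix m m ℝ}
    {Q Q' : Matrix n n ℝ} (hP : IsStarProjection P) (hQ' : IsStarProjection Q')
    (Z : Matrix m n ℝ) :
    frob (tangentSpaceProj P Q Z - tangentSpaceProj P' Q' Z) ≤
      (‖P - P'‖ + ‖Q - Q'‖) * frob Z := by
  have hsplit : tangentSpaceProj P Q Z - tangentSpaceProj P' Q' Z =
      (P - P') * (Z * (1 - Q')) + (1 - P) * (Z * (Q - Q')) := by
    simp only [tangentSpaceProj, Matrix.mul_sub, Matrix.sub_mul, Matrix.mul_one,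
      Matrix.one_mul, Matrix.mul_assoc]
    abel
  have h₁ : frob ((P - P') * (Z * (1 - Q'))) ≤ ‖P - P'‖ * frob Z := by
    refine (frob_mul_le_l2_opNorm_mul _ _).trans (mul_le_mul_of_nonneg_left ?_ (norm_nonneg _))
    exact (frob_mul_le_mul_l2_opNorm _ _).trans
      (mul_le_of_le_one_right (frob_nonneg Z) hQ'.one_sub.norm_le)
  have h₂ : frob ((1 - P) * (Z * (Q - Q'))) ≤ ‖Q - Q'‖ * frob Z := by
    refine (frob_mul_le_l2_opNorm_mul _ _).trans ?_
    rw [mul_comm ‖Q - Q'‖]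
    exact (mul_le_of_le_one_left (frob_nonneg _) hP.one_sub.norm_le).trans
      (frob_mul_le_mul_l2_opNorm _ _)
  rw [hsplit, add_mul]
  exact (frob_add_le _ _).trans (add_le_add h₁ h₂)

theorem stmt_8_general {p₁ p₂ r : ℕ} (hr : 0 < r)
    (Xt Xb : Matrix (Fin p₁) (Fin p₂) ℝ)
    (Ut Ub : Matrix (Fin p₁) (Fin r) ℝ) (Vt Vb : Matrix (Fin p₂) (Fin r) ℝ)
    (St : Matrix (Fin r) (Fin r) ℝ) (σb : Fin r → ℝ)
    (hXt : Xt = Ut * St * Vtᵀ) (hXb : Xb = Ub * Matrix.diagonal σb * Vbᵀ)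
    (hUt : Utᵀ * Ut = 1) (hUb : Ubᵀ * Ub = 1)
    (hVt : Vtᵀ * Vt = 1) (hVb : Vbᵀ * Vb = 1)
    (hσb : Antitone σb) (hσbpos : ∀ i, 0 < σb i)
    (P₁ P₂ : Matrix (Fin p₁) (Fin p₂) ℝ → Matrix (Fin p₁) (Fin p₂) ℝ)
    (hP₁ : ∀ Z, P₁ Z = Ut * Utᵀ * Z * (Vt * Vtᵀ) + (1 - Ut * Utᵀ) * Z * (Vt * Vtᵀ)
        + Ut * Utᵀ * Z * (1 - Vt * Vtᵀ))
    (hP₂ : ∀ Z, P₂ Z = Ub * Ubᵀ * Z * (Vb * Vbᵀ) + (1 - Ub * Ubᵀ) * Z * (Vb * Vbᵀ)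
        + Ub * Ubᵀ * Z * (1 - Vb * Vbᵀ)) :
    ∀ Z : Matrix (Fin p₁) (Fin p₂) ℝ,
      frob (P₁ Z - P₂ Z) ≤
        2 * spec (Xt - Xb) / σb ⟨r - 1, Nat.sub_lt hr one_pos⟩ * frob Z := by
  intro Z
  set c := σb ⟨r - 1, Nat.sub_lt hr one_pos⟩
  have hc : 0 < c := hσbpos _
  have hσc : ∀ i, c ≤ σb i := fun i => hσb (Fin.le_def.2 (Nat.le_sub_one_of_lt i.isLt))
  have hXtT : Xtᵀ = Vt * Stᵀ * Utᵀ := by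
    rw [hXt, transpose_mul, transpose_mul, transpose_transpose, Matrix.mul_assoc]
  have hXbT : Xbᵀ = Vb * diagonal σb * Ubᵀ := by
    rw [hXb, transpose_mul, transpose_mul, transpose_transpose, diagonal_transpose,
      Matrix.mul_assoc]
  have hU := l2_opNorm_mul_transpose_sub_le hXt hXb hUt hUb hVb hc hσc
  have hV := l2_opNorm_mul_transpose_sub_le hXtT hXbT hVt hVb hUb hc hσc
  rw [← transpose_sub, l2_opNorm_transpose] at hV
  have hP : P₁ Z - P₂ Z = tangentSpaceProj (Ut * Utᵀ) (Vt * Vtᵀ) Z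
      - tangentSpaceProj (Ub * Ubᵀ) (Vb * Vbᵀ) Z := by
    rw [hP₁, hP₂]
    rfl
  rw [hP, spec_eq_l2_opNorm]
  calc _ ≤ (‖Ut * Utᵀ - Ub * Ubᵀ‖ + ‖Vt * Vtᵀ - Vb * Vbᵀ‖) * frob Z :=
        frob_tangentSpaceProj_sub_le (isStarProjection_mul_transpose hUt)
          (isStarProjection_mul_transpose hVb) Z
    _ ≤ (‖Xt - Xb‖ / c + ‖Xt - Xb‖ / c) * frob Z := by gcongr; exact frob_nonneg Z
    _ = 2 * ‖Xt - Xb‖ / c * frob Z := by ring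

/-- The difference of tangent-space projectors at rank-r matrices Xᵗ and X̄ has
Frobenius-operator norm at most 2‖Xᵗ − X̄‖ / σ_r(X̄). -/
theorem stmt_8 {p₁ p₂ r : ℕ} (hr : 0 < r)
    (Xt Xb : Matrix (Fin p₁) (Fin p₂) ℝ)
    (Ut Ub : Matrix (Fin p₁) (Fin r) ℝ) (Vt Vb : Matrix (Fin p₂) (Fin r) ℝ)
    (St : Matrix (Fin r) (Fin r) ℝ) (σb : Fin r → ℝ)
    (hXt : Xt = Ut * St * Vtᵀ) (hXb : Xb = Ub * Matrix.diagonal σb * Vbᵀ)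
    (hUt : Utᵀ * Ut = 1) (hUb : Ubᵀ * Ub = 1)
    (hVt : Vtᵀ * Vt = 1) (hVb : Vbᵀ * Vb = 1)
    (hσb : Antitone σb) (hσbpos : ∀ i, 0 < σb i)
    (hrankt : Xt.rank = r) (hrankb : Xb.rank = r)
    (P₁ P₂ : Matrix (Fin p₁) (Fin p₂) ℝ → Matrix (Fin p₁) (Fin p₂) ℝ)
    (hP₁ : ∀ Z, P₁ Z = Ut * Utᵀ * Z * (Vt * Vtᵀ) + (1 - Ut * Utᵀ) * Z * (Vt * Vtᵀ)
        + Ut * Utᵀ * Z * (1 - Vt * Vtᵀ))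
    (hP₂ : ∀ Z, P₂ Z = Ub * Ubᵀ * Z * (Vb * Vbᵀ) + (1 - Ub * Ubᵀ) * Z * (Vb * Vbᵀ)
        + Ub * Ubᵀ * Z * (1 - Vb * Vbᵀ)) :
    ∀ Z : Matrix (Fin p₁) (Fin p₂) ℝ,
      frob (P₁ Z - P₂ Z) ≤
        2 * spec (Xt - Xb) / σb ⟨r - 1, Nat.sub_lt hr one_pos⟩ * frob Z :=
  stmt_8_general hr Xt Xb Ut Ub Vt Vb St σb hXt hXb hUt hUb hVt hVb hσb hσbpos P₁ P₂ hP₁ hP₂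
end
end

section
/- Let A : ℝ^{p₁×p₂} → ℝⁿ be linear with 2r-RIP constant R_{2r} < 1, let Xᵗ be a rank-r matrix with tangent-space projector P_{T} (P_T(Z) = P_U Z P_V + P_{U⊥} Z P_V + P_U Z P_{V⊥} for the singular subspaces U, V of Xᵗ), and suppose η ∈ T solves P_T(A*(A(η + Xᵗ) − y)) = 0. Then ⟨P_T(A*(A(Xᵗ) − y)), η⟩ = −‖A(η)‖₂² ≤ −(1−R_{2r})‖η‖_F², so η is a descent direction for f(X) = ½‖y − A(X)‖₂² restricted to the rank-r manifold whenever η ≠ 0. -/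
open Matrix
noncomputable section

/-! Since `η` lies in the tangent space and the tangent projector is self-adjoint, pairing the
Gauss–Newton equation `P_T(A*(A(η + Xᵗ) − y)) = 0` with `η` and moving `A*` across gives
`⟨P_T(A*(A Xᵗ − y)), η⟩ + ‖A η‖² = 0`. Every tangent matrix `Z = Z V Vᵀ + U (Uᵀ Z (1 − V Vᵀ))`
factors through `r + r` columns, so it has rank at most `2r` and the RIP lower bound applies. -/

variable {R ι m n k : Type*} [CommRing R] [Fintype m] [Fintype n] [Fintype k]

def frobInner (Z W : Matrix m n R) : R := ∑ i, ∑ j, Z i j * W i j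

lemma frobInner_comm (Z W : Matrix m n R) : frobInner Z W = frobInner W Z := by
  simp only [frobInner, mul_comm]

@[simp]
lemma frobInner_zero_left (W : Matrix m n R) : frobInner 0 W = 0 := by
  simp [frobInner]

lemma frobInner_sub_left (Z₁ Z₂ W : Matrix m n R) :
    frobInner (Z₁ - Z₂) W = frobInner Z₁ W - frobInner Z₂ W := by
  simp [frobInner, sub_mul, Finset.sum_sub_distrib]

lemma frobInner_add_left (Z₁ Z₂ W : Matrix m n R) :
    frobInner (Z₁ + Z₂) W = frobInner Z₁ W + frobInner Z₂ W := by
  simp [frobInner, add_mul, Finset.sum_add_distrib]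

lemma frobInner_eq_trace (Z W : Matrix m n R) : frobInner Z W = (Zᵀ * W).trace := by
  simp only [frobInner, trace, diag, mul_apply, transpose_apply]
  exact Finset.sum_comm

lemma frobInner_mul_mul_left (L : Matrix m m R) (W : Matrix m n R) (M : Matrix n n R)
    (Z : Matrix m n R) : frobInner (L * W * M) Z = frobInner W (Lᵀ * Z * Mᵀ) := by
  simp only [frobInner_eq_trace, transpose_mul, Matrix.mul_assoc]
  rw [trace_mul_comm Mᵀ]
  simp only [Matrix.mul_assoc]

section TangentSpace

variable [DecidableEq m] [DecidableEq n]

def tangentProj (U : Matrix m k R) (V : Matrix n k R) (Z : Matrix m n R) : Matrix m n R :=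
  U * Uᵀ * Z * (V * Vᵀ) + (1 - U * Uᵀ) * Z * (V * Vᵀ) + U * Uᵀ * Z * (1 - V * Vᵀ)

lemma tangentProj_eq_fromCols_mul_fromRows (U : Matrix m k R) (V : Matrix n k R)
    (Z : Matrix m n R) :
    tangentProj U V Z = fromCols (Z * V) U * fromRows Vᵀ (Uᵀ * Z * (1 - V * Vᵀ)) := by
  rw [fromCols_mul_fromRows, tangentProj]
  simp only [Matrix.sub_mul, Matrix.one_mul, Matrix.mul_assoc]
  abel

lemma rank_tangentProj_le [Nontrivial R] (U : Matrix m k R) (V : Matrix n k R)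
    (Z : Matrix m n R) : (tangentProj U V Z).rank ≤ 2 * Fintype.card k := by
  rw [tangentProj_eq_fromCols_mul_fromRows, two_mul, ← Fintype.card_sum]
  exact (rank_mul_le_left _ _).trans (rank_le_card_width _)

lemma frobInner_tangentProj_left (U : Matrix m k R) (V : Matrix n k R) (W Z : Matrix m n R) :
    frobInner (tangentProj U V W) Z = frobInner W (tangentProj U V Z) := by
  simp only [tangentProj, frobInner_add_left, frobInner_mul_mul_left, transpose_sub,
    transpose_one, transpose_mul, transpose_transpose]
  simp only [frobInner, Matrix.add_apply, mul_add, Finset.sum_add_distrib]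

end TangentSpace

lemma frobInner_gaussNewton_eq [Fintype ι] {A : Matrix m n R →ₗ[R] (ι → R)}
    {Astar : (ι → R) →ₗ[R] Matrix m n R} (hadj : ∀ Z v, A Z ⬝ᵥ v = frobInner Z (Astar v))
    {P : Matrix m n R → Matrix m n R} (hP : ∀ W Z, frobInner (P W) Z = frobInner W (P Z))
    {X η : Matrix m n R} {y : ι → R} (hη : P η = η) (hsol : P (Astar (A (η + X) - y)) = 0) :
    frobInner (P (Astar (A X - y))) η = -∑ i, A η i ^ 2 := by
  have hPη : ∀ W, frobInner (P W) η = frobInner W η := fun W => by rw [hP, hη]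
  have hsplit : Astar (A X - y) = Astar (A (η + X) - y) - Astar (A η) := by
    rw [← map_sub, map_add]
    congr 1
    abel
  have hnormal : frobInner (Astar (A (η + X) - y)) η = 0 := by
    rw [← hPη, hsol, frobInner_zero_left]
  have hAη : frobInner (Astar (A η)) η = ∑ i, A η i ^ 2 := by
    simp only [frobInner_comm _ η, ← hadj, dotProduct, sq]
  rw [hPη, hsplit, frobInner_sub_left, hnormal, hAη, zero_sub]

theorem stmt_16_general {p₁ p₂ r n : ℕ}
    (A : Matrix (Fin p₁) (Fin p₂) ℝ →ₗ[ℝ] (Fin n → ℝ))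
    (Astar : (Fin n → ℝ) →ₗ[ℝ] Matrix (Fin p₁) (Fin p₂) ℝ)
    (hadj : ∀ (Z : Matrix (Fin p₁) (Fin p₂) ℝ) (v : Fin n → ℝ),
      ∑ i, A Z i * v i = ∑ i, ∑ j, Z i j * Astar v i j)
    (R2r : ℝ)
    (hRIP : ∀ Z : Matrix (Fin p₁) (Fin p₂) ℝ, Z.rank ≤ 2 * r →
      (1 - R2r) * frob Z ^ 2 ≤ ∑ i, A Z i ^ 2 ∧ ∑ i, A Z i ^ 2 ≤ (1 + R2r) * frob Z ^ 2)
    (Xt : Matrix (Fin p₁) (Fin p₂) ℝ)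
    (U : Matrix (Fin p₁) (Fin r) ℝ)
    (V : Matrix (Fin p₂) (Fin r) ℝ)
    (PT : Matrix (Fin p₁) (Fin p₂) ℝ → Matrix (Fin p₁) (Fin p₂) ℝ)
    (hPT : ∀ Z, PT Z = U * Uᵀ * Z * (V * Vᵀ) + (1 - U * Uᵀ) * Z * (V * Vᵀ)
        + U * Uᵀ * Z * (1 - V * Vᵀ))
    (y : Fin n → ℝ)
    (η : Matrix (Fin p₁) (Fin p₂) ℝ) (hη : PT η = η)
    (hsol : PT (Astar (A (η + Xt) - y)) = 0) :
    (∑ i, ∑ j, PT (Astar (A Xt - y)) i j * η i j) = -(∑ i, A η i ^ 2) ∧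
    -(∑ i, A η i ^ 2) ≤ -((1 - R2r) * frob η ^ 2) := by
  obtain rfl : PT = tangentProj U V := funext hPT
  have hrank : η.rank ≤ 2 * r := by
    simpa [hη] using rank_tangentProj_le U V η
  exact ⟨frobInner_gaussNewton_eq hadj (frobInner_tangentProj_left U V) hη hsol,
    neg_le_neg (hRIP η hrank).1⟩

/-- The Riemannian Gauss-Newton direction η is a descent direction:
⟨grad f(Xᵗ), η⟩ = −‖A(η)‖₂² ≤ −(1 − R_{2r})‖η‖_F². -/
theorem stmt_16 {p₁ p₂ r n : ℕ}
    (A : Matrix (Fin p₁) (Fin p₂) ℝ →ₗ[ℝ] (Fin n → ℝ))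
    (Astar : (Fin n → ℝ) →ₗ[ℝ] Matrix (Fin p₁) (Fin p₂) ℝ)
    (hadj : ∀ (Z : Matrix (Fin p₁) (Fin p₂) ℝ) (v : Fin n → ℝ),
      ∑ i, A Z i * v i = ∑ i, ∑ j, Z i j * Astar v i j)
    (R2r : ℝ) (hR2r : R2r < 1)
    (hRIP : ∀ Z : Matrix (Fin p₁) (Fin p₂) ℝ, Z.rank ≤ 2 * r →
      (1 - R2r) * frob Z ^ 2 ≤ ∑ i, A Z i ^ 2 ∧ ∑ i, A Z i ^ 2 ≤ (1 + R2r) * frob Z ^ 2)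
    (Xt : Matrix (Fin p₁) (Fin p₂) ℝ)
    (U : Matrix (Fin p₁) (Fin r) ℝ) (S : Matrix (Fin r) (Fin r) ℝ)
    (V : Matrix (Fin p₂) (Fin r) ℝ)
    (hXt : Xt = U * S * Vᵀ) (hU : Uᵀ * U = 1) (hV : Vᵀ * V = 1)
    (hrank : Xt.rank = r)
    (PT : Matrix (Fin p₁) (Fin p₂) ℝ → Matrix (Fin p₁) (Fin p₂) ℝ)
    (hPT : ∀ Z, PT Z = U * Uᵀ * Z * (V * Vᵀ) + (1 - U * Uᵀ) * Z * (V * Vᵀ)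
        + U * Uᵀ * Z * (1 - V * Vᵀ))
    (y : Fin n → ℝ)
    (η : Matrix (Fin p₁) (Fin p₂) ℝ) (hη : PT η = η)
    (hsol : PT (Astar (A (η + Xt) - y)) = 0) :
    (∑ i, ∑ j, PT (Astar (A Xt - y)) i j * η i j) = -(∑ i, A η i ^ 2) ∧
    -(∑ i, A η i ^ 2) ≤ -((1 - R2r) * frob η ^ 2) :=
  stmt_16_general A Astar hadj R2r hRIP Xt U V PT hPT y η hη hsol
end
end
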